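/- Let X, Y ⊂ ℝ^d be compact, c ∈ C(X × Y), V ∈ C(Y), and let μ be a probability measure on X. Then the infimum over measurable maps T : X → Y of the functional L(V,T) = ∫_X (c(x,T(x)) − V(T(x))) dμ(x) is attained, and a measurable map T_V attains this infimum if and only if c(x, T_V(x)) − V(T_V(x)) = V^c(x) for μ-almost every x, where V^c(x) = inf_{y ∈ Y} (c(x,y) − V(y)). -/

import Mathlib

/-!
The minimisation of `L(V, ·)` decouples pointwise: for every admissible `T` one has
`V^c(x) ≤ c(x, T x) - V(T x)` on `X`, so `∫ V^c dμ` is a lower bound for `L(V, ·)`, and a map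
attains it exactly when the inequality is an equality `μ`-almost everywhere (a nonnegative
integrable function with zero integral vanishes a.e.). The bound is attained because, after a
Tietze extension of the reduced cost `c(x, y) - V(y)` off `X × Y`, the minimisers in `Y` can be
chosen measurably in `x`. That selection is the Kuratowski–Ryll-Nardzewski construction: pick, at
scale `2⁻ᵏ`, the first point of a dense sequence whose closed ball still meets the set of
minimisers inside all previously chosen balls; the centres form a Cauchy sequence of measurable
maps whose limit is a minimiser.
-/

open Set MeasureTheory Metric Filter Topology

namespace MeasurableSelection

variable {α β : Type*} [PseudoMetricSpace β] (F : α → Set β) (ys : ℕ → β)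

/-- `cell F ys k x` is the intersection of the closed balls `closedBall (ys (centerIndex j x)) 2⁻ʲ`,
`j < k`; the index chosen at step `k` is the least `i` whose ball meets `F x ∩ cell k x`
(it always exists by density, so the junk value `sInf ∅ = 0` never occurs). -/
noncomputable def cell : ℕ → α → Set β
  | 0 => fun _ => univ
  | k + 1 => fun x => cell k x ∩
      closedBall (ys (sInf {i | (F x ∩ cell k x ∩ closedBall (ys i) (1 / 2 ^ k)).Nonempty}))
        (1 / 2 ^ k)

noncomputable def centerIndex (k : ℕ) (x : α) : ℕ :=
  sInf {i | (F x ∩ cell F ys k x ∩ closedBall (ys i) (1 / 2 ^ k)).Nonempty}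

lemma cell_succ (k : ℕ) (x : α) :
    cell F ys (k + 1) x = cell F ys k x ∩ closedBall (ys (centerIndex F ys k x)) (1 / 2 ^ k) :=
  rfl

variable {F ys}

lemma exists_centerIndex (hys : DenseRange ys) {k : ℕ} {x : α}
    (h : (F x ∩ cell F ys k x).Nonempty) :
    ∃ i, (F x ∩ cell F ys k x ∩ closedBall (ys i) (1 / 2 ^ k)).Nonempty := by
  obtain ⟨z, hz⟩ := h
  obtain ⟨i, hi⟩ := hys.exists_dist_lt z (by positivity : (0 : ℝ) < 1 / 2 ^ k)
  exact ⟨i, z, hz, mem_closedBall.2 hi.le⟩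

lemma nonempty_inter_cell (hF : ∀ x, (F x).Nonempty) (hys : DenseRange ys) :
    ∀ k x, (F x ∩ cell F ys k x).Nonempty
  | 0, x => by simpa [cell] using hF x
  | k + 1, x => by
    rw [cell_succ, ← inter_assoc]
    exact Nat.sInf_mem (exists_centerIndex hys (nonempty_inter_cell hF hys k x))

lemma dist_centerIndex_succ_le (hF : ∀ x, (F x).Nonempty) (hys : DenseRange ys) (k : ℕ)
    (x : α) :
    dist (ys (centerIndex F ys k x)) (ys (centerIndex F ys (k + 1) x)) ≤ 4 / 2 / 2 ^ k := by
  obtain ⟨w, -, hw⟩ := nonempty_inter_cell hF hys (k + 2) x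
  rw [cell_succ, cell_succ, mem_inter_iff, mem_inter_iff, mem_closedBall, mem_closedBall] at hw
  calc dist (ys (centerIndex F ys k x)) (ys (centerIndex F ys (k + 1) x))
      ≤ dist w (ys (centerIndex F ys k x)) + dist w (ys (centerIndex F ys (k + 1) x)) :=
        dist_triangle_left ..
    _ ≤ 1 / 2 ^ k + 1 / 2 ^ (k + 1) := add_le_add hw.1.2 hw.2
    _ ≤ 4 / 2 / 2 ^ k := by rw [pow_succ]; field_simp; norm_num

lemma exists_mem_tendsto_centerIndex [CompleteSpace β] (hFc : ∀ x, IsClosed (F x))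
    (hF : ∀ x, (F x).Nonempty) (hys : DenseRange ys) (x : α) :
    ∃ y ∈ F x, Tendsto (fun k => ys (centerIndex F ys k x)) atTop (𝓝 y) := by
  have hcauchy : CauchySeq fun k => ys (centerIndex F ys k x) :=
    cauchySeq_of_le_geometric_two (dist_centerIndex_succ_le hF hys · x)
  obtain ⟨y, hy⟩ := cauchySeq_tendsto_of_complete hcauchy
  refine ⟨y, ?_, hy⟩
  choose w hwF hw using fun k => nonempty_inter_cell hF hys (k + 1) x
  refine (hFc x).mem_of_tendsto (b := atTop) (tendsto_iff_dist_tendsto_zero.2 ?_)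
    (.of_forall hwF)
  have hlim : Tendsto (fun k : ℕ => (5 : ℝ) / 2 ^ k) atTop (𝓝 0) :=
    tendsto_const_nhds.div_atTop (tendsto_pow_atTop_atTop_of_one_lt one_lt_two)
  refine squeeze_zero (fun _ => dist_nonneg) (fun k => ?_) hlim
  calc dist (w k) y
      ≤ dist (w k) (ys (centerIndex F ys k x)) + dist (ys (centerIndex F ys k x)) y :=
        dist_triangle ..
    _ ≤ 1 / 2 ^ k + 4 / 2 ^ k := add_le_add (mem_closedBall.1 (hw k).2)
        (dist_le_of_le_geometric_two_of_tendsto (dist_centerIndex_succ_le hF hys · x) hy k)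
    _ = 5 / 2 ^ k := by ring

variable [MeasurableSpace α]

lemma measurable_centerIndex (hF : ∀ x, (F x).Nonempty) (hys : DenseRange ys) {k : ℕ}
    (hk : ∀ S, IsClosed S → MeasurableSet {x | (F x ∩ cell F ys k x ∩ S).Nonempty}) :
    Measurable (centerIndex F ys k) := by
  classical
  have hex x := exists_centerIndex hys (nonempty_inter_cell hF hys k x)
  have : centerIndex F ys k = fun x => Nat.find (hex x) := funext fun x => Nat.sInf_def _
  rw [this]
  exact measurable_find hex fun i => hk _ isClosed_closedBall

lemma measurableSet_nonempty_inter_cell (hF : ∀ x, (F x).Nonempty) (hys : DenseRange ys)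
    (hhit : ∀ S, IsClosed S → MeasurableSet {x | (F x ∩ S).Nonempty}) :
    ∀ k S, IsClosed S → MeasurableSet {x | (F x ∩ cell F ys k x ∩ S).Nonempty}
  | 0, S, hS => by simpa [cell] using hhit S hS
  | k + 1, S, hS => by
    have hk := measurableSet_nonempty_inter_cell hF hys hhit k
    have : {x | (F x ∩ cell F ys (k + 1) x ∩ S).Nonempty} = ⋃ i, centerIndex F ys k ⁻¹' {i} ∩
        {x | (F x ∩ cell F ys k x ∩ (closedBall (ys i) (1 / 2 ^ k) ∩ S)).Nonempty} := by
      ext x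
      simp [cell_succ, inter_assoc]
    rw [this]
    exact .iUnion fun i => (measurable_centerIndex hF hys hk (measurableSet_singleton i)).inter
      (hk _ (isClosed_closedBall.inter hS))

end MeasurableSelection

open MeasurableSelection in
theorem exists_measurable_selection {α β : Type*} [MeasurableSpace α] [MetricSpace β]
    [CompleteSpace β] [TopologicalSpace.SeparableSpace β] [MeasurableSpace β] [BorelSpace β]
    {F : α → Set β} (hFc : ∀ x, IsClosed (F x)) (hF : ∀ x, (F x).Nonempty)
    (hhit : ∀ S, IsClosed S → MeasurableSet {x | (F x ∩ S).Nonempty}) :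
    ∃ T : α → β, Measurable T ∧ ∀ x, T x ∈ F x := by
  cases isEmpty_or_nonempty β with
  | inl hβ =>
    have : IsEmpty α := ⟨fun x => (hF x).elim fun y _ => isEmptyElim y⟩
    exact ⟨isEmptyElim, Subsingleton.measurable, isEmptyElim⟩
  | inr hβ =>
    have hys := TopologicalSpace.denseRange_denseSeq β
    choose T hTF hT using exists_mem_tendsto_centerIndex hFc hF hys
    refine ⟨T, measurable_of_tendsto_metrizable (fun k => measurable_from_nat.comp ?_)
      (tendsto_pi_nhds.2 hT), hTF⟩
    exact measurable_centerIndex hF hys (measurableSet_nonempty_inter_cell hF hys hhit k)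

theorem IsCompact.isClosed_setOf_exists_prodMk_mem {α β : Type*} [TopologicalSpace α]
    [TopologicalSpace β] {K : Set β} (hK : IsCompact K) {s : Set (α × β)} (hs : IsClosed s) :
    IsClosed {x | ∃ y ∈ K, (x, y) ∈ s} := by
  have := isCompact_iff_compactSpace.mp hK
  convert isClosedMap_fst_of_compactSpace (Y := K) _
    (hs.preimage (continuous_fst.prodMk (continuous_subtype_val.comp continuous_snd)))
  ext x
  simp [Subtype.exists, exists_prop]

theorem exists_measurable_isMinOn {α β : Type*} [TopologicalSpace α] [MeasurableSpace α]
    [OpensMeasurableSpace α] [MetricSpace β] [CompleteSpace β] [TopologicalSpace.SeparableSpace β]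
    [MeasurableSpace β] [BorelSpace β] {g : α × β → ℝ} (hg : Continuous g) {Y : Set β}
    (hY : IsCompact Y) (hYne : Y.Nonempty) :
    ∃ T : α → β, Measurable T ∧ ∀ x, T x ∈ Y ∧ IsMinOn (fun y => g (x, y)) Y (T x) := by
  have hmin : IsClosed {p : α × β | ∀ y ∈ Y, g p ≤ g (p.1, y)} := by
    simp only [ofPred_forall]
    exact isClosed_biInter fun y _ =>
      isClosed_le hg (hg.comp (continuous_fst.prodMk continuous_const))
  refine exists_measurable_selection (F := fun x => {y | y ∈ Y ∧ IsMinOn (fun y => g (x, y)) Y y})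
    (fun x => hY.isClosed.inter (hmin.preimage (.prodMk_right x))) (fun x => ?_) (fun S hS => ?_)
  · obtain ⟨y, hy, hymin⟩ := hY.exists_isMinOn hYne (hg.comp (.prodMk_right x)).continuousOn
    exact ⟨y, hy, hymin⟩
  · convert ((hY.inter_right hS).isClosed_setOf_exists_prodMk_mem hmin).measurableSet using 2
    simp only [mem_inter_iff, and_right_comm, Set.Nonempty, isMinOn_iff, mem_ofPred_eq]

theorem ContinuousOn.exists_continuous_eqOn {X : Type*} [TopologicalSpace X] [NormalSpace X]
    {s : Set X} (hs : IsClosed s) {f : X → ℝ} (hf : ContinuousOn f s) :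
    ∃ g : X → ℝ, Continuous g ∧ EqOn g f s := by
  obtain ⟨g, hg⟩ := ContinuousMap.exists_restrict_eq hs ⟨s.domRestrict f, hf.domRestrict⟩
  exact ⟨g, g.continuous, fun x hx => congr($hg ⟨x, hx⟩)⟩

theorem integrable_comp_prodMk_of_mapsTo {α β : Type*} [TopologicalSpace α] [MeasurableSpace α]
    [OpensMeasurableSpace α] [TopologicalSpace β] [SecondCountableTopology β]
    [MeasurableSpace β] [OpensMeasurableSpace β] {μ : Measure α} [IsFiniteMeasure μ]
    {g : α × β → ℝ} (hg : Continuous g) {X : Set α} {Y : Set β} (hXY : IsCompact (X ×ˢ Y))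
    (hX : ∀ᵐ x ∂μ, x ∈ X) {T : α → β} (hT : Measurable T) (hTXY : MapsTo T X Y) :
    Integrable (fun x => g (x, T x)) μ := by
  obtain ⟨C, hC⟩ := hXY.exists_bound_of_continuousOn hg.continuousOn
  exact .of_bound (hg.measurable.comp (measurable_id.prodMk hT)).aestronglyMeasurable C
    (hX.mono fun x hx => hC _ ⟨hx, hTXY hx⟩)

theorem isMinOn_integral_iff_ae_eq {ι α : Type*} [MeasurableSpace α] {μ : Measure α} {A : Set ι}
    {f : ι → α → ℝ} {i₀ j : ι} (hi₀ : i₀ ∈ A) (hmin : ∀ i ∈ A, f i₀ ≤ᵐ[μ] f i)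
    (hint : ∀ i ∈ A, Integrable (f i) μ) (hj : j ∈ A) :
    IsMinOn (fun i => ∫ x, f i x ∂μ) A j ↔ f j =ᵐ[μ] f i₀ := by
  refine ⟨fun h => ?_, fun h => isMinOn_iff.2 fun i hi => ?_⟩
  · refine ((integral_eq_iff_of_ae_le (hint _ hi₀) (hint _ hj) (hmin _ hj)).1 ?_).symm
    exact le_antisymm (integral_mono_ae (hint _ hi₀) (hint _ hj) (hmin _ hj))
      (isMinOn_iff.1 h _ hi₀)
  · rw [integral_congr_ae h]
    exact integral_mono_ae (hint _ hi₀) (hint _ hi) (hmin _ hi)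
theorem recovery_characterization_general {d : ℕ} (X Y : Set (EuclideanSpace ℝ (Fin d)))
    (hX : IsCompact X) (hY : IsCompact Y) (hYne : Y.Nonempty)
    (c : EuclideanSpace ℝ (Fin d) → EuclideanSpace ℝ (Fin d) → ℝ)
    (hc : ContinuousOn (fun p : EuclideanSpace ℝ (Fin d) × EuclideanSpace ℝ (Fin d) =>
      c p.1 p.2) (X ×ˢ Y))
    (V : EuclideanSpace ℝ (Fin d) → ℝ) (hV : ContinuousOn V Y)
    (μ : Measure (EuclideanSpace ℝ (Fin d))) [IsProbabilityMeasure μ] (hμ : μ Xᶜ = 0) :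
    (∃ T₀ : EuclideanSpace ℝ (Fin d) → EuclideanSpace ℝ (Fin d),
      Measurable T₀ ∧ MapsTo T₀ X Y ∧
      ∀ T : EuclideanSpace ℝ (Fin d) → EuclideanSpace ℝ (Fin d),
        Measurable T → MapsTo T X Y →
        ∫ x, (c x (T₀ x) - V (T₀ x)) ∂μ ≤ ∫ x, (c x (T x) - V (T x)) ∂μ) ∧
    (∀ TV : EuclideanSpace ℝ (Fin d) → EuclideanSpace ℝ (Fin d),
      Measurable TV → MapsTo TV X Y →
      ((∀ T : EuclideanSpace ℝ (Fin d) → EuclideanSpace ℝ (Fin d),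
          Measurable T → MapsTo T X Y →
          ∫ x, (c x (TV x) - V (TV x)) ∂μ ≤ ∫ x, (c x (T x) - V (T x)) ∂μ) ↔
        (∀ᵐ x ∂μ, c x (TV x) - V (TV x) = ⨅ y : Y, (c x y - V y)))) := by
  set A := {T | Measurable T ∧ MapsTo T X Y}
  set L := fun (T : EuclideanSpace ℝ (Fin d) → EuclideanSpace ℝ (Fin d)) x => c x (T x) - V (T x)
  have hcV : ContinuousOn (fun p : EuclideanSpace ℝ (Fin d) × EuclideanSpace ℝ (Fin d) =>
      c p.1 p.2 - V p.2) (X ×ˢ Y) := hc.sub (hV.comp continuousOn_snd fun p hp => hp.2)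
  obtain ⟨g, hg, hgcV⟩ := hcV.exists_continuous_eqOn (hX.prod hY).isClosed
  have hgL : ∀ x ∈ X, ∀ y ∈ Y, g (x, y) = c x y - V y := fun x hx y hy => hgcV ⟨hx, hy⟩
  obtain ⟨T₀, hT₀, hT₀g⟩ := exists_measurable_isMinOn hg hY hYne
  have hT₀A : T₀ ∈ A := ⟨hT₀, fun x _ => (hT₀g x).1⟩
  have hT₀min : ∀ x ∈ X, IsMinOn (fun y => c x y - V y) Y (T₀ x) := fun x hx =>
    (hT₀g x).2.congr (eventuallyEq_principal.2 (hgL x hx)) (hgL x hx _ (hT₀g x).1)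
  have hXae : ∀ᵐ x ∂μ, x ∈ X := mem_ae_iff.2 hμ
  have hint : ∀ T ∈ A, Integrable (L T) μ := fun T hT =>
    (integrable_comp_prodMk_of_mapsTo hg (hX.prod hY) hXae hT.1 hT.2).congr
      (hXae.mono fun x hx => hgL x hx _ (hT.2 hx))
  have hmin : ∀ T ∈ A, L T₀ ≤ᵐ[μ] L T := fun T hT =>
    hXae.mono fun x hx => isMinOn_iff.1 (hT₀min x hx) _ (hT.2 hx)
  have hiInf : L T₀ =ᵐ[μ] fun x => ⨅ y : Y, (c x y - V y) :=
    hXae.mono fun x hx => ((hT₀min x hx).iInf_eq (hT₀g x).1).symm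
  have hopt T (hT : T ∈ A) := isMinOn_integral_iff_ae_eq hT₀A hmin hint hT
  refine ⟨⟨T₀, hT₀, hT₀A.2, fun T hT hTXY => ?_⟩, fun TV hTV hTVXY => ?_⟩
  · exact isMinOn_iff.1 ((hopt T₀ hT₀A).2 .rfl) T ⟨hT, hTXY⟩
  · have hTVopt := hopt TV ⟨hTV, hTVXY⟩
    exact ⟨fun h => (hTVopt.1 (isMinOn_iff.2 fun T hT => h T hT.1 hT.2)).trans hiInf,
      fun h T hT hTXY => isMinOn_iff.1 (hTVopt.2 (EventuallyEq.trans h hiInf.symm)) T ⟨hT, hTXY⟩⟩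

/-- The infimum over measurable maps `T : X → Y` of
`L(V,T) = ∫ (c(x,T(x)) − V(T(x))) dμ` is attained, and `T_V` attains it iff
`c(x,T_V(x)) − V(T_V(x)) = V^c(x)` for `μ`-a.e. `x`. -/
theorem recovery_characterization {d : ℕ} (X Y : Set (EuclideanSpace ℝ (Fin d)))
    (hX : IsCompact X) (hXne : X.Nonempty) (hY : IsCompact Y) (hYne : Y.Nonempty)
    (c : EuclideanSpace ℝ (Fin d) → EuclideanSpace ℝ (Fin d) → ℝ)
    (hc : ContinuousOn (fun p : EuclideanSpace ℝ (Fin d) × EuclideanSpace ℝ (Fin d) =>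
      c p.1 p.2) (X ×ˢ Y))
    (V : EuclideanSpace ℝ (Fin d) → ℝ) (hV : ContinuousOn V Y)
    (μ : Measure (EuclideanSpace ℝ (Fin d))) [IsProbabilityMeasure μ] (hμ : μ Xᶜ = 0) :
    (∃ T₀ : EuclideanSpace ℝ (Fin d) → EuclideanSpace ℝ (Fin d),
      Measurable T₀ ∧ MapsTo T₀ X Y ∧
      ∀ T : EuclideanSpace ℝ (Fin d) → EuclideanSpace ℝ (Fin d),
        Measurable T → MapsTo T X Y →
        ∫ x, (c x (T₀ x) - V (T₀ x)) ∂μ ≤ ∫ x, (c x (T x) - V (T x)) ∂μ) ∧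
    (∀ TV : EuclideanSpace ℝ (Fin d) → EuclideanSpace ℝ (Fin d),
      Measurable TV → MapsTo TV X Y →
      ((∀ T : EuclideanSpace ℝ (Fin d) → EuclideanSpace ℝ (Fin d),
          Measurable T → MapsTo T X Y →
          ∫ x, (c x (TV x) - V (TV x)) ∂μ ≤ ∫ x, (c x (T x) - V (T x)) ∂μ) ↔
        (∀ᵐ x ∂μ, c x (TV x) - V (TV x) = ⨅ y : Y, (c x y - V y)))) :=
  recovery_characterization_general X Y hX hY hYne c hc V hV μ hμ
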